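/- arXiv:2209.10575 — 2 statements merged into one kernel-verified Lean document; each statement's English description precedes it below -/
import Mathlib

section
/- For every μ ≥ 0, every η > η̄, and every (β̃,γ̃) ∈ ℝ^p × ℝ^q, the function (β,γ) ↦ L_{η,μ}((β,γ),(β̃,γ̃)) is strongly convex on ℝ^p × ℝ_+^q with modulus of strong convexity η − η̄; that is, (β,γ) ↦ L_{η,μ}((β,γ),(β̃,γ̃)) − ((η−η̄)/2)‖(β,γ)‖² is convex on ℝ^p × ℝ_+^q. -/
open Matrix Real Filter Topology Bornology
open scoped Pointwise

noncomputable section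

abbrev Vec (k : ℕ) : Type := Fin k → ℝ

/-- Euclidean norm of a vector. -/
def eNorm {ι : Type*} [Fintype ι] (x : ι → ℝ) : ℝ := Real.sqrt (∑ j, (x j) ^ 2)

/-- Squared Euclidean norm of a pair of vectors. -/
def sqnorm2 {p q : ℕ} (w : Vec p × Vec q) : ℝ :=
  (∑ j, (w.1 j) ^ 2) + ∑ j, (w.2 j) ^ 2

/-- ℓ²→ℓ² operator norm of a matrix (its largest singular value). -/
def opNorm {ι κ : Type*} [Fintype ι] [Fintype κ] (M : Matrix ι κ ℝ) : ℝ :=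
  sInf {c : ℝ | 0 ≤ c ∧ ∀ x : κ → ℝ, eNorm (M.mulVec x) ≤ c * eNorm x}

/-- Smallest eigenvalue of a symmetric matrix, via Rayleigh quotients. -/
def minEig {ι : Type*} [Fintype ι] (M : Matrix ι ι ℝ) : ℝ :=
  sInf {r : ℝ | ∃ x : ι → ℝ, eNorm x = 1 ∧ r = x ⬝ᵥ M.mulVec x}

/-- Largest eigenvalue of a symmetric matrix, via Rayleigh quotients. -/
def maxEig {ι : Type*} [Fintype ι] (M : Matrix ι ι ℝ) : ℝ :=
  sSup {r : ℝ | ∃ x : ι → ℝ, eNorm x = 1 ∧ r = x ⬝ᵥ M.mulVec x}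

/-- The log-barrier (perspective of the negative log). -/
def phiBar (μ : ℝ) {q : ℕ} (γ : Vec q) : EReal :=
  if μ = 0 then (if ∀ j, 0 ≤ γ j then (0 : EReal) else ⊤)
  else if 0 < μ then
    (if ∀ j, 0 < γ j then (((-μ) * ∑ j, Real.log (γ j / μ) : ℝ) : EReal) else ⊤)
  else ⊤

/-- The coupling function κ_η. -/
def kappaFun (η : ℝ) {p q : ℕ} (w : Vec p × Vec q) : ℝ := η / 2 * sqnorm2 w

/-- 1-coercivity: liminf of F(w)/‖w‖ as ‖w‖ → ∞ is positive. -/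
def OneCoercive {p q : ℕ} (R : Vec p × Vec q → EReal) : Prop :=
  ∃ c : ℝ, 0 < c ∧ ∃ r : ℝ, ∀ w : Vec p × Vec q,
    r ≤ Real.sqrt (sqnorm2 w) → ((c * Real.sqrt (sqnorm2 w) : ℝ) : EReal) ≤ R w

/-- Data of a linear mixed-effects model. -/
structure LMEData (m p q : ℕ) where
  n : Fin m → ℕ
  X : ∀ i, Matrix (Fin (n i)) (Fin p) ℝ
  Z : ∀ i, Matrix (Fin (n i)) (Fin q) ℝ
  y : ∀ i, Fin (n i) → ℝ
  lam : ∀ i, Matrix (Fin (n i)) (Fin (n i)) ℝ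

namespace LMEData

variable {m p q : ℕ}

/-- Ω_i(Γ) = Z_i Γ Z_iᵀ + Λ_i. -/
def Omega (D : LMEData m p q) (Γ : Matrix (Fin q) (Fin q) ℝ) (i : Fin m) :
    Matrix (Fin (D.n i)) (Fin (D.n i)) ℝ :=
  D.Z i * Γ * (D.Z i)ᵀ + D.lam i

/-- The marginal negative log-likelihood L_ML(β, Γ). -/
def LML (D : LMEData m p q) (β : Vec p) (Γ : Matrix (Fin q) (Fin q) ℝ) : ℝ :=
  ∑ i, ((1 : ℝ) / 2 * ((D.y i - D.X i *ᵥ β) ⬝ᵥ ((D.Omega Γ i)⁻¹ *ᵥ (D.y i - D.X i *ᵥ β)))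
    + (1 : ℝ) / 2 * Real.log (D.Omega Γ i).det)

/-- L(β, γ) = L_ML(β, Diag γ). -/
def L (D : LMEData m p q) (β : Vec p) (γ : Vec q) : ℝ := D.LML β (Matrix.diagonal γ)

/-- ν = max_i (1/2) μ_min(Λ_i)^{-2} σ_max(Z_i)^4. -/
def nu (D : LMEData m p q) : ℝ :=
  ⨆ i : Fin m, (1 : ℝ) / 2 * ((minEig (D.lam i)) ^ 2)⁻¹ * (opNorm (D.Z i)) ^ 4

/-- η̄ = ν m. -/
def etabar (D : LMEData m p q) : ℝ := D.nu * m

/-- L_{η,μ}((β,γ),(β̃,γ̃)) = L(β,γ) + φ_μ(γ) + κ_η(β−β̃,γ−γ̃). -/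
def Lrelax (D : LMEData m p q) (η μ : ℝ) (x w : Vec p × Vec q) : EReal :=
  ((D.L x.1 x.2 + kappaFun η (x - w) : ℝ) : EReal) + phiBar μ x.2

/-- The optimal value function u_{η,μ} (with extended-real values). -/
def uval (D : LMEData m p q) (η μ : ℝ) (w : Vec p × Vec q) : EReal :=
  ⨅ x : Vec p × Vec q, D.Lrelax η μ x w

/-- The (real-valued) optimal value function u_{η,μ}. -/
def ufun (D : LMEData m p q) (η μ : ℝ) (w : Vec p × Vec q) : ℝ := (D.uval η μ w).toReal

/-- Partial gradient ∇_β L. -/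
def gradB (D : LMEData m p q) (β : Vec p) (γ : Vec q) : Vec p :=
  fun j => fderiv ℝ (fun b => D.L b γ) β (Pi.single j 1)

/-- Partial gradient ∇_γ L. -/
def gradG (D : LMEData m p q) (β : Vec p) (γ : Vec q) : Vec q :=
  fun j => fderiv ℝ (fun g => D.L β g) γ (Pi.single j 1)

/-- The map G_{η,μ}. -/
def Gmap (D : LMEData m p q) (η μ : ℝ) (x : Vec p × Vec q × Vec q) (w : Vec p × Vec q) :
    Vec p × Vec q × Vec q :=
  (D.gradB x.1 x.2.1 + η • (x.1 - w.1),
   D.gradG x.1 x.2.1 + η • (x.2.1 - w.2) - x.2.2,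
   fun j => x.2.2 j * x.2.1 j - μ)

/-- Second-derivative block ∇²_{ββ} L. -/
def hessBB (D : LMEData m p q) (β : Vec p) (γ : Vec q) : Matrix (Fin p) (Fin p) ℝ :=
  Matrix.of fun j k => fderiv ℝ (fun b => D.gradB b γ j) β (Pi.single k 1)

/-- Second-derivative block ∇²_{γγ} L. -/
def hessGG (D : LMEData m p q) (β : Vec p) (γ : Vec q) : Matrix (Fin q) (Fin q) ℝ :=
  Matrix.of fun j k => fderiv ℝ (fun g => D.gradG β g j) γ (Pi.single k 1)

/-- Second-derivative block ∇²_{γβ} L (the p×q cross block). -/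
def hessGB (D : LMEData m p q) (β : Vec p) (γ : Vec q) : Matrix (Fin p) (Fin q) ℝ :=
  Matrix.of fun j k => fderiv ℝ (fun g => D.gradB β g j) γ (Pi.single k 1)

/-- Second-derivative block ∇²_{βγ} L (the q×p cross block). -/
def hessBG (D : LMEData m p q) (β : Vec p) (γ : Vec q) : Matrix (Fin q) (Fin p) ℝ :=
  Matrix.of fun j k => fderiv ℝ (fun b => D.gradG b γ j) β (Pi.single k 1)

end LMEData

/-- f(r, M) = (1/2)(rᵀM⁻¹r + ln det M). -/
def fRM {n : ℕ} (r : Vec n) (M : Matrix (Fin n) (Fin n) ℝ) : ℝ :=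
  (1 : ℝ) / 2 * (r ⬝ᵥ (M⁻¹ *ᵥ r) + Real.log M.det)

/-! Each group contributes `fRM (y_i - X_i β) (Ω_i (Diag γ))`, where the residual and `Ω_i` are
affine in `(β, γ)`. The term `rᵀ Ω⁻¹ r` is jointly convex in `(r, Ω)`. The term `ln det Ω` is
concave, but along a segment `Ω_t = Ω₀ + t B`, with `B = Z_i Diag(γ₁ - γ₀) Z_iᵀ`, its second
derivative is `-‖Ω_t^{-1/2} B Ω_t^{-1/2}‖_F² ≥ -μ_min(Λ_i)^{-2} σ_max(Z_i)^4 ‖γ₁ - γ₀‖²`, so `L` is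
`η̄`-weakly convex. The quadratic `κ_η(· - w) - (η - η̄)/2 ‖·‖²` is `η̄/2 ‖·‖²` plus an affine
function, which compensates exactly, and the log-barrier is convex. -/

section RayleighQuotient

variable {ι κ : Type*} [Fintype ι] [Fintype κ]

lemma eNorm_sq (x : ι → ℝ) : eNorm x ^ 2 = ∑ j, x j ^ 2 :=
  Real.sq_sqrt (Finset.sum_nonneg fun _ _ => sq_nonneg _)

lemma eNorm_smul (a : ℝ) (x : ι → ℝ) : eNorm (a • x) = |a| * eNorm x := by
  simp only [eNorm, Pi.smul_apply, smul_eq_mul, mul_pow, ← Finset.mul_sum]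
  rw [Real.sqrt_mul (sq_nonneg a), Real.sqrt_sq_eq_abs]

lemma eNorm_pos {x : ι → ℝ} (hx : x ≠ 0) : 0 < eNorm x := by
  obtain ⟨j, hj⟩ := Function.ne_iff.mp hx
  exact Real.sqrt_pos.mpr <| Finset.sum_pos' (fun _ _ => sq_nonneg _)
    ⟨j, Finset.mem_univ j, lt_of_le_of_ne (sq_nonneg _) (pow_ne_zero 2 hj).symm⟩

def frobSq (M : Matrix ι κ ℝ) : ℝ := ∑ i, ∑ j, M i j ^ 2

lemma eNorm_mulVec_le_sqrt_frobSq (M : Matrix ι κ ℝ) (x : κ → ℝ) :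
    eNorm (M *ᵥ x) ≤ Real.sqrt (frobSq M) * eNorm x := by
  rw [eNorm, eNorm, ← Real.sqrt_mul' _ (Finset.sum_nonneg fun j _ => sq_nonneg (x j)),
    frobSq, Finset.sum_mul]
  exact Real.sqrt_le_sqrt <| Finset.sum_le_sum fun i _ => Finset.sum_mul_sq_le_sq_mul_sq _ _ _

lemma eNorm_mulVec_le_opNorm (M : Matrix ι κ ℝ) (x : κ → ℝ) :
    eNorm (M *ᵥ x) ≤ opNorm M * eNorm x := by
  set S := {c : ℝ | 0 ≤ c ∧ ∀ x : κ → ℝ, eNorm (M.mulVec x) ≤ c * eNorm x}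
  have hS : S = Set.Ici 0 ∩ ⋂ x : κ → ℝ, {c : ℝ | eNorm (M.mulVec x) ≤ c * eNorm x} := by
    ext c; simp [S, Set.mem_iInter]
  have hclosed : IsClosed S := hS ▸ isClosed_Ici.inter (isClosed_iInter fun x =>
    isClosed_le continuous_const (continuous_id.mul continuous_const))
  have hne : S.Nonempty :=
    ⟨_, Real.sqrt_nonneg _, eNorm_mulVec_le_sqrt_frobSq M⟩
  exact (hclosed.csInf_mem hne ⟨0, fun c hc => hc.1⟩).2 x

lemma sum_sq_mulVec_le_opNorm_sq (M : Matrix ι κ ℝ) (x : κ → ℝ) :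
    ∑ i, (M *ᵥ x) i ^ 2 ≤ opNorm M ^ 2 * ∑ j, x j ^ 2 := by
  rw [← eNorm_sq, ← eNorm_sq, ← mul_pow]
  exact pow_le_pow_left₀ (Real.sqrt_nonneg _) (eNorm_mulVec_le_opNorm M x) 2

lemma rayleigh_set_eq_image (M : Matrix ι ι ℝ) :
    {r : ℝ | ∃ x : ι → ℝ, eNorm x = 1 ∧ r = x ⬝ᵥ M.mulVec x} =
      (fun y : EuclideanSpace ℝ ι => y.ofLp ⬝ᵥ M *ᵥ y.ofLp) '' Metric.sphere 0 1 := by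
  have hnorm (y : EuclideanSpace ℝ ι) : ‖y‖ = eNorm y.ofLp := by
    simp [EuclideanSpace.norm_eq, eNorm]
  ext r
  constructor
  · rintro ⟨x, hx, rfl⟩
    exact ⟨WithLp.toLp 2 x, by simpa [hnorm] using hx, rfl⟩
  · rintro ⟨y, hy, rfl⟩
    exact ⟨y.ofLp, by simpa [hnorm] using hy, rfl⟩

lemma isCompact_rayleigh_set (M : Matrix ι ι ℝ) :
    IsCompact {r : ℝ | ∃ x : ι → ℝ, eNorm x = 1 ∧ r = x ⬝ᵥ M.mulVec x} := by
  rw [rayleigh_set_eq_image]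
  refine (isCompact_sphere _ _).image ?_
  have h := PiLp.continuous_ofLp 2 (fun _ : ι => ℝ)
  fun_prop

lemma minEig_mul_sum_sq_le (M : Matrix ι ι ℝ) (x : ι → ℝ) :
    minEig M * ∑ j, x j ^ 2 ≤ x ⬝ᵥ M *ᵥ x := by
  rcases eq_or_ne x 0 with rfl | hx
  · simp
  have hc := eNorm_pos hx
  have hunit : eNorm ((eNorm x)⁻¹ • x) = 1 := by
    rw [eNorm_smul, abs_of_pos (inv_pos.mpr hc), inv_mul_cancel₀ hc.ne']
  have hle := csInf_le (isCompact_rayleigh_set M).bddBelow ⟨_, hunit, rfl⟩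
  rw [Matrix.mulVec_smul, dotProduct_smul, smul_dotProduct, smul_eq_mul, smul_eq_mul,
    ← mul_assoc] at hle
  calc minEig M * ∑ j, x j ^ 2 = minEig M * eNorm x ^ 2 := by rw [eNorm_sq]
    _ ≤ (eNorm x)⁻¹ * (eNorm x)⁻¹ * (x ⬝ᵥ M *ᵥ x) * eNorm x ^ 2 :=
      mul_le_mul_of_nonneg_right hle (sq_nonneg _)
    _ = x ⬝ᵥ M *ᵥ x := by field_simp

lemma minEig_pos [Nonempty ι] {M : Matrix ι ι ℝ} (hM : M.PosDef) : 0 < minEig M := by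
  have hne : {r : ℝ | ∃ x : ι → ℝ, eNorm x = 1 ∧ r = x ⬝ᵥ M.mulVec x}.Nonempty := by
    rw [rayleigh_set_eq_image]
    exact ((NormedSpace.sphere_nonempty).mpr zero_le_one).image _
  obtain ⟨x, hx, hmin⟩ := (isCompact_rayleigh_set M).sInf_mem hne
  rw [minEig, hmin]
  have hx0 : x ≠ 0 := by rintro rfl; simp [eNorm] at hx
  simpa using hM.dotProduct_mulVec_pos hx0

end RayleighQuotient

section Frobenius

variable {ι κ ρ : Type*} [Fintype ι] [Fintype κ] [Fintype ρ]

lemma frobSq_transpose (M : Matrix ι κ ℝ) : frobSq Mᵀ = frobSq M :=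
  Finset.sum_comm

lemma frobSq_diagonal [DecidableEq ι] (d : ι → ℝ) : frobSq (diagonal d) = ∑ k, d k ^ 2 := by
  refine Finset.sum_congr rfl fun i _ => ?_
  rw [Finset.sum_eq_single i (fun j _ hj => by simp [diagonal_apply_ne _ hj.symm]) (by simp),
    diagonal_apply_eq]

lemma frobSq_mul_le {M : Matrix ι κ ℝ} {c : ℝ}
    (hM : ∀ v, ∑ i, (M *ᵥ v) i ^ 2 ≤ c * ∑ j, v j ^ 2) (X : Matrix κ ρ ℝ) :
    frobSq (M * X) ≤ c * frobSq X := by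
  calc frobSq (M * X) = ∑ j, ∑ i, (M *ᵥ fun k => X k j) i ^ 2 := by
        rw [frobSq, Finset.sum_comm]; rfl
    _ ≤ ∑ j, c * ∑ k, X k j ^ 2 := Finset.sum_le_sum fun j _ => hM _
    _ = c * frobSq X := by rw [← Finset.mul_sum, frobSq, Finset.sum_comm]

lemma frobSq_mul_transpose_le {M : Matrix ι κ ℝ} {c : ℝ}
    (hM : ∀ v, ∑ i, (M *ᵥ v) i ^ 2 ≤ c * ∑ j, v j ^ 2) (X : Matrix ρ κ ℝ) :
    frobSq (X * Mᵀ) ≤ c * frobSq X := by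
  rw [← frobSq_transpose, transpose_mul, transpose_transpose, ← frobSq_transpose X]
  exact frobSq_mul_le hM Xᵀ

/-- Cauchy–Schwarz: `‖Mv‖⁴ = ⟨v, MᵀMv⟩² ≤ ‖v‖² ‖MᵀMv‖²`. -/
lemma sum_sq_mulVec_le_of_transpose {M : Matrix ι κ ℝ} {c : ℝ} (hc : 0 ≤ c)
    (hM : ∀ v, ∑ i, (Mᵀ *ᵥ v) i ^ 2 ≤ c * ∑ j, v j ^ 2) (v : κ → ℝ) :
    ∑ i, (M *ᵥ v) i ^ 2 ≤ c * ∑ j, v j ^ 2 := by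
  set s := ∑ i, (M *ᵥ v) i ^ 2
  have hs : s = v ⬝ᵥ (Mᵀ *ᵥ (M *ᵥ v)) := by
    rw [dotProduct_mulVec, vecMul_transpose]
    simp [s, dotProduct, sq]
  have hcs : s * s ≤ c * (∑ j, v j ^ 2) * s := by
    calc s * s = (v ⬝ᵥ (Mᵀ *ᵥ (M *ᵥ v))) ^ 2 := by rw [← hs, sq]
      _ ≤ (∑ j, v j ^ 2) * ∑ j, (Mᵀ *ᵥ (M *ᵥ v)) j ^ 2 := Finset.sum_mul_sq_le_sq_mul_sq _ _ _
      _ ≤ (∑ j, v j ^ 2) * (c * s) :=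
        mul_le_mul_of_nonneg_left (hM _) (Finset.sum_nonneg fun _ _ => sq_nonneg _)
      _ = c * (∑ j, v j ^ 2) * s := by ring
  rcases (Finset.sum_nonneg fun i _ => sq_nonneg ((M *ᵥ v) i) : 0 ≤ s).eq_or_lt with h0 | hpos
  · rw [show s = 0 from h0.symm]; positivity
  · exact le_of_mul_le_mul_right hcs hpos

end Frobenius

section MatrixConvexity

variable {ι κ : Type*} [Fintype ι] [Fintype κ]

lemma dotProduct_transpose_mulVec_conj (G : Matrix κ ι ℝ) (M : Matrix ι ι ℝ) (v : κ → ℝ) :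
    (Gᵀ *ᵥ v) ⬝ᵥ M *ᵥ (Gᵀ *ᵥ v) = v ⬝ᵥ (G * M * Gᵀ) *ᵥ v := by
  rw [← mulVec_mulVec, ← mulVec_mulVec, dotProduct_mulVec v G, ← mulVec_transpose]

lemma posDef_of_mul_sum_sq_le {M : Matrix ι ι ℝ} (hM : M.IsHermitian) {μ : ℝ} (hμ : 0 < μ)
    (hlow : ∀ x, μ * ∑ j, x j ^ 2 ≤ x ⬝ᵥ M *ᵥ x) : M.PosDef := by
  refine PosDef.of_dotProduct_mulVec_pos hM fun x hx => ?_
  have hx2 : 0 < ∑ j, x j ^ 2 := by rw [← eNorm_sq]; exact pow_pos (eNorm_pos hx) 2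
  simpa using (mul_pos hμ hx2).trans_le (hlow x)

variable [DecidableEq ι]

lemma two_mul_dotProduct_sub_le {N : Matrix ι ι ℝ} (hN : N.PosDef) (z s : ι → ℝ) :
    2 * (z ⬝ᵥ s) - z ⬝ᵥ N *ᵥ z ≤ s ⬝ᵥ N⁻¹ *ᵥ s := by
  have hdet : IsUnit N.det := hN.det_pos.ne'.isUnit
  have hsq : 0 ≤ (s - N *ᵥ z) ⬝ᵥ N⁻¹ *ᵥ (s - N *ᵥ z) := by
    simpa using hN.inv.posSemidef.dotProduct_mulVec_nonneg (s - N *ᵥ z)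
  have hcross : (N *ᵥ z) ⬝ᵥ N⁻¹ *ᵥ s = z ⬝ᵥ s := by
    rw [dotProduct_mulVec, ← mulVec_transpose, mulVec_mulVec, transpose_nonsing_inv,
      (isHermitian_iff_isSymm.mp hN.isHermitian).eq, nonsing_inv_mul _ hdet, one_mulVec]
  have hinv : N⁻¹ *ᵥ (N *ᵥ z) = z := by
    rw [mulVec_mulVec, nonsing_inv_mul _ hdet, one_mulVec]
  rw [mulVec_sub, sub_dotProduct, dotProduct_sub, dotProduct_sub, hcross, hinv,
    dotProduct_comm s z, dotProduct_comm (N *ᵥ z) z] at hsq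
  linarith

/-- `rᵀ M⁻¹ r` is the supremum over `z` of `2 zᵀr - zᵀMz`, which is affine in `(r, M)`;
it is attained at `z = M⁻¹ r`. -/
lemma dotProduct_inv_mulVec_combo_le {M₁ M₂ : Matrix ι ι ℝ} (h₁ : M₁.PosDef) (h₂ : M₂.PosDef)
    {a b : ℝ} (ha : 0 ≤ a) (hb : 0 ≤ b) (hM : (a • M₁ + b • M₂).PosDef) (r₁ r₂ : ι → ℝ) :
    (a • r₁ + b • r₂) ⬝ᵥ (a • M₁ + b • M₂)⁻¹ *ᵥ (a • r₁ + b • r₂) ≤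
      a * (r₁ ⬝ᵥ M₁⁻¹ *ᵥ r₁) + b * (r₂ ⬝ᵥ M₂⁻¹ *ᵥ r₂) := by
  set M := a • M₁ + b • M₂
  set r := a • r₁ + b • r₂
  set z := M⁻¹ *ᵥ r
  have hMz : M *ᵥ z = r := by
    rw [mulVec_mulVec, mul_nonsing_inv _ hM.det_pos.ne'.isUnit, one_mulVec]
  have hval : r ⬝ᵥ z = a * (2 * (z ⬝ᵥ r₁) - z ⬝ᵥ M₁ *ᵥ z)
      + b * (2 * (z ⬝ᵥ r₂) - z ⬝ᵥ M₂ *ᵥ z) := by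
    have hr : r ⬝ᵥ z = 2 * (z ⬝ᵥ r) - z ⬝ᵥ M *ᵥ z := by rw [hMz, dotProduct_comm]; ring
    simp only [hr, r, M, add_mulVec, smul_mulVec, dotProduct_add, dotProduct_smul, smul_eq_mul]
    ring
  rw [hval]
  nlinarith [two_mul_dotProduct_sub_le h₁ z r₁, two_mul_dotProduct_sub_le h₂ z r₂]

open scoped MatrixOrder in
lemma Matrix.PosDef.exists_simultaneous_diagonalization {A B : Matrix ι ι ℝ} (hA : A.PosDef)
    (hB : B.IsHermitian) :
    ∃ (R : Matrix ι ι ℝ) (l : ι → ℝ), IsUnit R.det ∧ A = R * Rᵀ ∧ B = R * diagonal l * Rᵀ := by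
  set S := CFC.sqrt A
  have hSS : S * S = A := CFC.sqrt_mul_sqrt_self A hA.posSemidef.nonneg
  have hSt : Sᵀ = S := (isHermitian_iff_isSymm.mp (CFC.sqrt_nonneg A).posSemidef.1).eq
  have hSdet : IsUnit S.det := by
    have h : IsUnit (S.det * S.det) := by rw [← det_mul, hSS]; exact hA.det_pos.ne'.isUnit
    exact (IsUnit.mul_iff.mp h).1
  have hSinvt : (S⁻¹)ᵀ = S⁻¹ := by rw [transpose_nonsing_inv, hSt]
  have hC : (S⁻¹ * B * S⁻¹).IsHermitian := by
    rw [isHermitian_iff_isSymm, IsSymm, transpose_mul, transpose_mul, hSinvt,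
      (isHermitian_iff_isSymm.mp hB).eq, mul_assoc]
  set U : Matrix ι ι ℝ := (hC.eigenvectorUnitary : Matrix ι ι ℝ)
  have hUU : U * Uᵀ = 1 := by
    simpa [star_eq_conjTranspose] using (mem_unitaryGroup_iff.mp hC.eigenvectorUnitary.2)
  have hspec : S⁻¹ * B * S⁻¹ = U * diagonal hC.eigenvalues * Uᵀ := by
    simpa [Unitary.conjStarAlgAut_apply, star_eq_conjTranspose, Function.comp_def]
      using hC.spectral_theorem
  refine ⟨S * U, hC.eigenvalues, ?_, ?_, ?_⟩
  · rw [det_mul]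
    refine hSdet.mul (IsUnit.of_mul_eq_one Uᵀ.det ?_)
    rw [← det_mul, hUU, det_one]
  · rw [transpose_mul, hSt, mul_assoc, ← mul_assoc U, hUU, one_mul, hSS]
  · rw [transpose_mul, hSt, ← mul_assoc, mul_assoc S, mul_assoc S, ← hspec]
    simp only [← mul_assoc, mul_nonsing_inv _ hSdet, one_mul]
    rw [mul_assoc, nonsing_inv_mul _ hSdet, mul_one]

end MatrixConvexity

section LogDet

variable {ι : Type*} [Fintype ι]

/-- `f t + K t²` is convex. -/
lemma le_combo_of_deriv2_ge {f f' f'' : ℝ → ℝ} {K : ℝ}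
    (hf : ∀ t ∈ Set.Icc (0 : ℝ) 1, HasDerivAt f (f' t) t)
    (hf' : ∀ t ∈ Set.Icc (0 : ℝ) 1, HasDerivAt f' (f'' t) t)
    (hK : ∀ t ∈ Set.Icc (0 : ℝ) 1, -(2 * K) ≤ f'' t)
    {a b : ℝ} (ha : 0 ≤ a) (hb : 0 ≤ b) (hab : a + b = 1) :
    f b ≤ a * f 0 + b * f 1 + a * b * K := by
  have hint : interior (Set.Icc (0 : ℝ) 1) ⊆ Set.Icc 0 1 := interior_subset
  have hconv : ConvexOn ℝ (Set.Icc 0 1) fun t => f t + K * t ^ 2 := by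
    refine convexOn_of_hasDerivWithinAt2_nonneg (f' := fun t => f' t + K * (2 * t))
      (f'' := fun t => f'' t + 2 * K) (convex_Icc 0 1) ?_ ?_ ?_ ?_
    · exact fun t ht => ((hf t ht).add ((hasDerivAt_pow 2 t).const_mul K)).continuousAt
        |>.continuousWithinAt
    · intro t ht
      refine ((hf t (hint ht)).add ?_).hasDerivWithinAt
      simpa using (hasDerivAt_pow 2 t).const_mul K
    · intro t ht
      refine ((hf' t (hint ht)).add ?_).hasDerivWithinAt
      simpa [mul_comm] using ((hasDerivAt_id t).const_mul 2).const_mul K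
    · intro t ht
      linarith [hK t (hint ht)]
  have h := hconv.2 (Set.left_mem_Icc.mpr zero_le_one) (Set.right_mem_Icc.mpr zero_le_one) ha hb hab
  simp only [smul_eq_mul, mul_zero, mul_one, zero_add] at h
  have ha' : a = 1 - b := by linarith
  subst ha'
  nlinarith

lemma sum_log_one_add_mul_le {l : ι → ℝ} {K : ℝ}
    (hpos : ∀ t ∈ Set.Icc (0 : ℝ) 1, ∀ k, 0 < 1 + t * l k)
    (hK : ∀ t ∈ Set.Icc (0 : ℝ) 1, ∑ k, (l k / (1 + t * l k)) ^ 2 ≤ 2 * K)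
    {a b : ℝ} (ha : 0 ≤ a) (hb : 0 ≤ b) (hab : a + b = 1) :
    ∑ k, Real.log (1 + b * l k) ≤ b * ∑ k, Real.log (1 + l k) + a * b * K := by
  have hlin (k : ι) (t : ℝ) : HasDerivAt (fun s => 1 + s * l k) (l k) t := by
    simpa using ((hasDerivAt_id t).mul_const (l k)).const_add 1
  have h := le_combo_of_deriv2_ge (f := fun t => ∑ k, Real.log (1 + t * l k))
    (f' := fun t => ∑ k, l k / (1 + t * l k)) (f'' := fun t => ∑ k, -(l k / (1 + t * l k)) ^ 2)
    (K := K) ?_ ?_ ?_ ha hb hab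
  · simpa using h
  · intro t ht
    refine HasDerivAt.fun_sum fun k _ => ?_
    simpa [div_eq_inv_mul] using ((hlin k t).log (hpos t ht k).ne')
  · intro t ht
    refine HasDerivAt.fun_sum fun k _ => ?_
    simp only [div_eq_mul_inv]
    exact (((hlin k t).inv (hpos t ht k).ne').const_mul (l k)).congr_deriv
      (by rw [mul_pow, inv_pow]; ring)
  · intro t ht
    rw [Finset.sum_neg_distrib, neg_le_neg_iff]
    exact hK t ht

lemma mul_sum_sq_le_segment {M₀ M₁ : Matrix ι ι ℝ} {μ : ℝ}
    (hμ₀ : ∀ x, μ * ∑ j, x j ^ 2 ≤ x ⬝ᵥ M₀ *ᵥ x) (hμ₁ : ∀ x, μ * ∑ j, x j ^ 2 ≤ x ⬝ᵥ M₁ *ᵥ x)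
    {t : ℝ} (ht : t ∈ Set.Icc (0 : ℝ) 1) (x : ι → ℝ) :
    μ * ∑ j, x j ^ 2 ≤ x ⬝ᵥ (M₀ + t • (M₁ - M₀)) *ᵥ x := by
  have h : x ⬝ᵥ (M₀ + t • (M₁ - M₀)) *ᵥ x
      = (1 - t) * (x ⬝ᵥ M₀ *ᵥ x) + t * (x ⬝ᵥ M₁ *ᵥ x) := by
    simp only [add_mulVec, smul_mulVec, sub_mulVec, dotProduct_add, dotProduct_smul,
      dotProduct_sub, smul_eq_mul]
    ring
  rw [h]
  nlinarith [hμ₀ x, hμ₁ x, ht.1, ht.2]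

variable [DecidableEq ι]

lemma sum_sq_div_le_of_congr_diagonal {M B R : Matrix ι ι ℝ} {d l : ι → ℝ}
    (hR : IsUnit R.det) (hM : M = R * diagonal d * Rᵀ) (hB : B = R * diagonal l * Rᵀ)
    (hd : ∀ k, 0 < d k) {μ : ℝ} (hμ : 0 < μ) (hlow : ∀ x, μ * ∑ j, x j ^ 2 ≤ x ⬝ᵥ M *ᵥ x) :
    ∑ k, (l k / d k) ^ 2 ≤ (μ ^ 2)⁻¹ * frobSq B := by
  set G := diagonal (fun k => (Real.sqrt (d k))⁻¹) * R⁻¹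
  have hconj (e : ι → ℝ) : G * (R * diagonal e * Rᵀ) * Gᵀ = diagonal fun k => e k / d k := by
    have hRt : IsUnit Rᵀ.det := by rwa [det_transpose]
    simp only [G, transpose_mul, diagonal_transpose, transpose_nonsing_inv, mul_assoc,
      mul_nonsing_inv_cancel_left _ _ hRt]
    simp only [← mul_assoc, nonsing_inv_mul _ hR, mul_one, diagonal_mul_diagonal]
    congr 1; funext k
    rw [mul_comm, ← mul_assoc, ← mul_inv, Real.mul_self_sqrt (hd k).le, div_eq_inv_mul]
  have hGt (v : ι → ℝ) : ∑ i, (Gᵀ *ᵥ v) i ^ 2 ≤ μ⁻¹ * ∑ j, v j ^ 2 := by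
    have h := hlow (Gᵀ *ᵥ v)
    rw [dotProduct_transpose_mulVec_conj, hM, hconj,
      show (fun k => d k / d k) = fun _ => 1 from funext fun k => div_self (hd k).ne',
      diagonal_one, one_mulVec] at h
    rw [le_inv_mul_iff₀ hμ]
    simpa [dotProduct, sq] using h
  have hG := sum_sq_mulVec_le_of_transpose (inv_nonneg.mpr hμ.le) hGt
  calc ∑ k, (l k / d k) ^ 2 = frobSq (G * (B * Gᵀ)) := by
        rw [← mul_assoc, hB, hconj, frobSq_diagonal]
    _ ≤ μ⁻¹ * (μ⁻¹ * frobSq B) :=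
        (frobSq_mul_le hG _).trans <| mul_le_mul_of_nonneg_left
          (frobSq_mul_transpose_le hG B) (inv_nonneg.mpr hμ.le)
    _ = (μ ^ 2)⁻¹ * frobSq B := by rw [← mul_assoc, ← mul_inv, sq]

lemma pos_of_posDef_congr_diagonal {R : Matrix ι ι ℝ} (hR : IsUnit R.det) {d : ι → ℝ}
    (h : (R * diagonal d * Rᵀ).PosDef) (k : ι) : 0 < d k := by
  rw [← conjTranspose_eq_transpose_of_trivial, ← star_eq_conjTranspose,
    IsUnit.posDef_star_right_conjugate_iff ((isUnit_iff_isUnit_det R).mpr hR),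
    posDef_diagonal_iff] at h
  exact h k

lemma log_det_congr_diagonal {R : Matrix ι ι ℝ} (hR : IsUnit R.det) {d : ι → ℝ}
    (hd : ∀ k, 0 < d k) :
    Real.log (R * diagonal d * Rᵀ).det = Real.log (R.det ^ 2) + ∑ k, Real.log (d k) := by
  rw [det_mul, det_mul, det_transpose, det_diagonal, mul_comm, ← mul_assoc, ← sq,
    Real.log_mul (pow_ne_zero 2 hR.ne_zero) (Finset.prod_pos fun k _ => hd k).ne',
    Real.log_prod fun k _ => (hd k).ne']

/-- The segment `M₀ + t (M₁ - M₀)` is congruent to `diagonal (1 + t l)`, so the second derivative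
of `log det` along it is `-∑ (l / (1 + t l))²`, a squared Frobenius norm controlled by `μ`. -/
lemma log_det_combo_le {M₀ M₁ : Matrix ι ι ℝ} (h₀ : M₀.PosDef) (h₁ : M₁.IsHermitian)
    {μ : ℝ} (hμ : 0 < μ) (hμ₀ : ∀ x, μ * ∑ j, x j ^ 2 ≤ x ⬝ᵥ M₀ *ᵥ x)
    (hμ₁ : ∀ x, μ * ∑ j, x j ^ 2 ≤ x ⬝ᵥ M₁ *ᵥ x) {a b : ℝ} (ha : 0 ≤ a) (hb : 0 ≤ b)
    (hab : a + b = 1) :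
    Real.log (a • M₀ + b • M₁).det ≤ a * Real.log M₀.det + b * Real.log M₁.det
      + a * b * ((μ ^ 2)⁻¹ * frobSq (M₁ - M₀) / 2) := by
  have hB := h₁.sub h₀.isHermitian
  obtain ⟨R, l, hR, hA, hRB⟩ := h₀.exists_simultaneous_diagonalization hB
  have hseg (t : ℝ) : M₀ + t • (M₁ - M₀) = R * diagonal (fun k => 1 + t * l k) * Rᵀ := by
    have hdiag : diagonal (fun k => 1 + t * l k) = 1 + t • diagonal l := by
      rw [← diagonal_one, ← diagonal_smul, diagonal_add]; rfl
    rw [hdiag, mul_add, add_mul, mul_one, ← hA, Matrix.mul_smul, Matrix.smul_mul, ← hRB]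
  have hlow {t : ℝ} (ht : t ∈ Set.Icc (0 : ℝ) 1) := mul_sum_sq_le_segment hμ₀ hμ₁ ht
  have hpos : ∀ t ∈ Set.Icc (0 : ℝ) 1, ∀ k, 0 < 1 + t * l k := fun t ht =>
    pos_of_posDef_congr_diagonal hR <| hseg t ▸ posDef_of_mul_sum_sq_le
      (h₀.isHermitian.add (hB.smul (IsSelfAdjoint.all t))) hμ (hlow ht)
  have hlog (t : ℝ) (ht : t ∈ Set.Icc (0 : ℝ) 1) : Real.log (M₀ + t • (M₁ - M₀)).det
      = Real.log (R.det ^ 2) + ∑ k, Real.log (1 + t * l k) := by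
    rw [hseg, log_det_congr_diagonal hR (hpos t ht)]
  have hK := sum_log_one_add_mul_le (K := (μ ^ 2)⁻¹ * frobSq (M₁ - M₀) / 2) hpos
    (fun t ht => by
      rw [mul_div_cancel₀ _ two_ne_zero]
      exact sum_sq_div_le_of_congr_diagonal hR (hseg t) hRB (hpos t ht) hμ (hlow ht))
    ha hb hab
  have hb₀ : a • M₀ + b • M₁ = M₀ + b • (M₁ - M₀) := by
    rw [smul_sub, show a = 1 - b by linarith, sub_smul, one_smul]; abel
  have hlog₀ : Real.log M₀.det = Real.log (R.det ^ 2) := by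
    simpa using hlog 0 (Set.left_mem_Icc.mpr zero_le_one)
  have hlog₁ : Real.log M₁.det = Real.log (R.det ^ 2) + ∑ k, Real.log (1 + l k) := by
    simpa using hlog 1 (Set.right_mem_Icc.mpr zero_le_one)
  rw [hb₀, hlog b ⟨hb, by linarith⟩, hlog₀, hlog₁]
  rw [show a = 1 - b by linarith] at hK ⊢
  linarith

end LogDet

section MixedModel

variable {ι κ : Type*}

lemma smul_add_smul_nonneg {γ₁ γ₂ : κ → ℝ} (h₁ : ∀ j, 0 ≤ γ₁ j) (h₂ : ∀ j, 0 ≤ γ₂ j)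
    {a b : ℝ} (ha : 0 ≤ a) (hb : 0 ≤ b) (j : κ) : 0 ≤ (a • γ₁ + b • γ₂) j :=
  add_nonneg (mul_nonneg ha (h₁ j)) (mul_nonneg hb (h₂ j))

lemma sub_mulVec_combo [Fintype κ] (y : ι → ℝ) (X : Matrix ι κ ℝ)
    (β₁ β₂ : κ → ℝ) {a b : ℝ} (hab : a + b = 1) :
    y - X *ᵥ (a • β₁ + b • β₂) = a • (y - X *ᵥ β₁) + b • (y - X *ᵥ β₂) := by
  have hy : y = a • y + b • y := by rw [← add_smul, hab, one_smul]
  rw [mulVec_add, mulVec_smul, mulVec_smul, smul_sub, smul_sub]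
  nth_rewrite 1 [hy]
  abel

variable [Fintype κ] [DecidableEq κ]

lemma mul_diagonal_mul_transpose_add_combo (Z : Matrix ι κ ℝ) (Λ : Matrix ι ι ℝ)
    (γ₁ γ₂ : κ → ℝ) {a b : ℝ} (hab : a + b = 1) :
    Z * diagonal (a • γ₁ + b • γ₂) * Zᵀ + Λ
      = a • (Z * diagonal γ₁ * Zᵀ + Λ) + b • (Z * diagonal γ₂ * Zᵀ + Λ) := by
  have hd : diagonal (a • γ₁ + b • γ₂) = a • diagonal γ₁ + b • diagonal γ₂ := by
    rw [← diagonal_smul, ← diagonal_smul, diagonal_add]; rfl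
  have hΛ : Λ = a • Λ + b • Λ := by rw [← add_smul, hab, one_smul]
  rw [hd, Matrix.mul_add, Matrix.add_mul, Matrix.mul_smul, Matrix.mul_smul, Matrix.smul_mul,
    Matrix.smul_mul, smul_add, smul_add]
  nth_rewrite 1 [hΛ]
  abel

variable [Fintype ι]

lemma posSemidef_mul_diagonal_mul_transpose (Z : Matrix ι κ ℝ) {γ : κ → ℝ}
    (hγ : ∀ j, 0 ≤ γ j) : (Z * diagonal γ * Zᵀ).PosSemidef := by
  simpa using (PosSemidef.diagonal fun j => hγ j).mul_mul_conjTranspose_same Z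

lemma posDef_mul_diagonal_mul_transpose_add (Z : Matrix ι κ ℝ) {Λ : Matrix ι ι ℝ}
    (hΛ : Λ.PosDef) {γ : κ → ℝ} (hγ : ∀ j, 0 ≤ γ j) : (Z * diagonal γ * Zᵀ + Λ).PosDef :=
  PosDef.posSemidef_add (posSemidef_mul_diagonal_mul_transpose Z hγ) hΛ

lemma minEig_mul_sum_sq_le_omega (Z : Matrix ι κ ℝ) (Λ : Matrix ι ι ℝ) {γ : κ → ℝ}
    (hγ : ∀ j, 0 ≤ γ j) (x : ι → ℝ) :
    minEig Λ * ∑ j, x j ^ 2 ≤ x ⬝ᵥ (Z * diagonal γ * Zᵀ + Λ) *ᵥ x := by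
  have h := (posSemidef_mul_diagonal_mul_transpose Z hγ).dotProduct_mulVec_nonneg x
  rw [add_mulVec, dotProduct_add]
  simp only [star_trivial] at h
  linarith [minEig_mul_sum_sq_le Λ x]

lemma frobSq_mul_diagonal_mul_transpose_le (Z : Matrix ι κ ℝ) (d : κ → ℝ) :
    frobSq (Z * diagonal d * Zᵀ) ≤ opNorm Z ^ 4 * ∑ j, d j ^ 2 := by
  have hZ := sum_sq_mulVec_le_opNorm_sq Z
  calc frobSq (Z * diagonal d * Zᵀ) ≤ opNorm Z ^ 2 * frobSq (Z * diagonal d) :=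
        frobSq_mul_transpose_le hZ _
    _ ≤ opNorm Z ^ 2 * (opNorm Z ^ 2 * frobSq (diagonal d)) :=
        mul_le_mul_of_nonneg_left (frobSq_mul_le hZ _) (sq_nonneg _)
    _ = opNorm Z ^ 4 * ∑ j, d j ^ 2 := by rw [frobSq_diagonal]; ring

variable [DecidableEq ι]

lemma log_det_omega_combo_le (Z : Matrix ι κ ℝ) {Λ : Matrix ι ι ℝ} (hΛ : Λ.PosDef)
    {γ₁ γ₂ : κ → ℝ} (h₁ : ∀ j, 0 ≤ γ₁ j) (h₂ : ∀ j, 0 ≤ γ₂ j)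
    {a b : ℝ} (ha : 0 ≤ a) (hb : 0 ≤ b) (hab : a + b = 1) :
    Real.log (Z * diagonal (a • γ₁ + b • γ₂) * Zᵀ + Λ).det
      ≤ a * Real.log (Z * diagonal γ₁ * Zᵀ + Λ).det + b * Real.log (Z * diagonal γ₂ * Zᵀ + Λ).det
        + a * b * (1 / 2 * (minEig Λ ^ 2)⁻¹ * opNorm Z ^ 4) * ∑ j, (γ₁ j - γ₂ j) ^ 2 := by
  rcases isEmpty_or_nonempty ι with hι | hι
  · simp only [det_isEmpty, Real.log_one, mul_zero, zero_add]
    positivity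
  have hdiff : (Z * diagonal γ₂ * Zᵀ + Λ) - (Z * diagonal γ₁ * Zᵀ + Λ)
      = Z * diagonal (γ₂ - γ₁) * Zᵀ := by
    rw [add_sub_add_right_eq_sub, ← Matrix.sub_mul, ← Matrix.mul_sub, diagonal_sub]; rfl
  have h := log_det_combo_le (posDef_mul_diagonal_mul_transpose_add Z hΛ h₁)
    (posDef_mul_diagonal_mul_transpose_add Z hΛ h₂).isHermitian (minEig_pos hΛ)
    (minEig_mul_sum_sq_le_omega Z Λ h₁) (minEig_mul_sum_sq_le_omega Z Λ h₂) ha hb hab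
  rw [← mul_diagonal_mul_transpose_add_combo Z Λ γ₁ γ₂ hab, hdiff] at h
  have hsym : ∑ j, (γ₂ - γ₁) j ^ 2 = ∑ j, (γ₁ j - γ₂ j) ^ 2 :=
    Finset.sum_congr rfl fun j _ => by rw [Pi.sub_apply, ← neg_sub, neg_sq]
  refine h.trans (add_le_add_right ?_ _)
  calc a * b * ((minEig Λ ^ 2)⁻¹ * frobSq (Z * diagonal (γ₂ - γ₁) * Zᵀ) / 2)
      ≤ a * b * ((minEig Λ ^ 2)⁻¹ * (opNorm Z ^ 4 * ∑ j, (γ₂ - γ₁) j ^ 2) / 2) := by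
        gcongr
        exact frobSq_mul_diagonal_mul_transpose_le Z _
    _ = a * b * (1 / 2 * (minEig Λ ^ 2)⁻¹ * opNorm Z ^ 4) * ∑ j, (γ₁ j - γ₂ j) ^ 2 := by
        rw [hsym]; ring

lemma fRM_omega_combo_le {n : ℕ} (Z : Matrix (Fin n) κ ℝ) {Λ : Matrix (Fin n) (Fin n) ℝ}
    (hΛ : Λ.PosDef) {γ₁ γ₂ : κ → ℝ} (h₁ : ∀ j, 0 ≤ γ₁ j) (h₂ : ∀ j, 0 ≤ γ₂ j)
    (r₁ r₂ : Vec n) {a b : ℝ} (ha : 0 ≤ a) (hb : 0 ≤ b) (hab : a + b = 1) :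
    fRM (a • r₁ + b • r₂) (Z * diagonal (a • γ₁ + b • γ₂) * Zᵀ + Λ)
      ≤ a * fRM r₁ (Z * diagonal γ₁ * Zᵀ + Λ) + b * fRM r₂ (Z * diagonal γ₂ * Zᵀ + Λ)
        + a * b / 2 * (1 / 2 * (minEig Λ ^ 2)⁻¹ * opNorm Z ^ 4) * ∑ j, (γ₁ j - γ₂ j) ^ 2 := by
  have hcombo := mul_diagonal_mul_transpose_add_combo Z Λ γ₁ γ₂ hab
  have hquad := dotProduct_inv_mulVec_combo_le (posDef_mul_diagonal_mul_transpose_add Z hΛ h₁)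
    (posDef_mul_diagonal_mul_transpose_add Z hΛ h₂) ha hb
    (hcombo ▸ posDef_mul_diagonal_mul_transpose_add Z hΛ (smul_add_smul_nonneg h₁ h₂ ha hb)) r₁ r₂
  rw [← hcombo] at hquad
  have hlog := log_det_omega_combo_le Z hΛ h₁ h₂ ha hb hab
  simp only [fRM]
  linarith

end MixedModel

namespace LMEData

variable {m p q : ℕ}

lemma LML_eq_sum_fRM (D : LMEData m p q) (β : Vec p) (Γ : Matrix (Fin q) (Fin q) ℝ) :
    D.LML β Γ = ∑ i, fRM (D.y i - D.X i *ᵥ β) (D.Omega Γ i) := by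
  simp only [LML, fRM, mul_add]

lemma le_nu (D : LMEData m p q) (i : Fin m) :
    1 / 2 * (minEig (D.lam i) ^ 2)⁻¹ * opNorm (D.Z i) ^ 4 ≤ D.nu :=
  le_ciSup (f := fun i => 1 / 2 * (minEig (D.lam i) ^ 2)⁻¹ * opNorm (D.Z i) ^ 4)
    (Set.finite_range _).bddAbove i

lemma sum_le_nu (D : LMEData m p q) :
    ∑ i, 1 / 2 * (minEig (D.lam i) ^ 2)⁻¹ * opNorm (D.Z i) ^ 4 ≤ m * D.nu := by
  calc _ ≤ ∑ _i : Fin m, D.nu := Finset.sum_le_sum fun i _ => D.le_nu i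
    _ = m * D.nu := by simp

lemma L_combo_le (D : LMEData m p q) (hlam : ∀ i, (D.lam i).PosDef) {x z : Vec p × Vec q}
    (hx : ∀ j, 0 ≤ x.2 j) (hz : ∀ j, 0 ≤ z.2 j) {a b : ℝ} (ha : 0 ≤ a) (hb : 0 ≤ b)
    (hab : a + b = 1) :
    D.L (a • x + b • z).1 (a • x + b • z).2
      ≤ a * D.L x.1 x.2 + b * D.L z.1 z.2 + D.etabar / 2 * (a * b * sqnorm2 (x - z)) := by
  set c : Fin m → ℝ := fun i => 1 / 2 * (minEig (D.lam i) ^ 2)⁻¹ * opNorm (D.Z i) ^ 4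
  set S := ∑ j, (x.2 j - z.2 j) ^ 2
  have hterm (i : Fin m) :
      fRM (D.y i - D.X i *ᵥ (a • x + b • z).1) (D.Omega (diagonal (a • x + b • z).2) i)
        ≤ a * fRM (D.y i - D.X i *ᵥ x.1) (D.Omega (diagonal x.2) i)
          + b * fRM (D.y i - D.X i *ᵥ z.1) (D.Omega (diagonal z.2) i) + a * b / 2 * c i * S := by
    rw [Prod.fst_add, Prod.smul_fst, Prod.smul_fst, sub_mulVec_combo _ _ _ _ hab]
    exact fRM_omega_combo_le (D.Z i) (hlam i) hx hz _ _ ha hb hab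
  have hc : ∑ i, c i ≤ m * D.nu := D.sum_le_nu
  have hc₀ : 0 ≤ ∑ i, c i := Finset.sum_nonneg fun i _ => by positivity
  have hS : S ≤ sqnorm2 (x - z) :=
    le_add_of_nonneg_left (Finset.sum_nonneg fun _ _ => sq_nonneg _)
  have hS₀ : 0 ≤ S := Finset.sum_nonneg fun _ _ => sq_nonneg _
  have hsq₀ : 0 ≤ sqnorm2 (x - z) := hS₀.trans hS
  calc D.L (a • x + b • z).1 (a • x + b • z).2
      ≤ ∑ i, (a * fRM (D.y i - D.X i *ᵥ x.1) (D.Omega (diagonal x.2) i)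
          + b * fRM (D.y i - D.X i *ᵥ z.1) (D.Omega (diagonal z.2) i)
          + a * b / 2 * c i * S) := by
        rw [L, LML_eq_sum_fRM]; exact Finset.sum_le_sum fun i _ => hterm i
    _ = a * D.L x.1 x.2 + b * D.L z.1 z.2 + a * b / 2 * (S * ∑ i, c i) := by
        simp only [L, LML_eq_sum_fRM, Finset.sum_add_distrib, ← Finset.mul_sum, ← Finset.sum_mul]
        ring
    _ ≤ a * D.L x.1 x.2 + b * D.L z.1 z.2 + a * b / 2 * (sqnorm2 (x - z) * (m * D.nu)) := by
        gcongr
    _ = a * D.L x.1 x.2 + b * D.L z.1 z.2 + D.etabar / 2 * (a * b * sqnorm2 (x - z)) := by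
        rw [etabar]; ring

end LMEData

section Quadratic

variable {ι : Type*} [Fintype ι]

lemma sum_sq_combo (x z : ι → ℝ) {a b : ℝ} (hab : a + b = 1) :
    ∑ j, (a • x + b • z) j ^ 2
      = a * ∑ j, x j ^ 2 + b * ∑ j, z j ^ 2 - a * b * ∑ j, (x - z) j ^ 2 := by
  simp only [Finset.mul_sum, ← Finset.sum_add_distrib, ← Finset.sum_sub_distrib]
  refine Finset.sum_congr rfl fun j _ => ?_
  simp only [Pi.add_apply, Pi.smul_apply, Pi.sub_apply, smul_eq_mul]
  rw [show b = 1 - a by linarith]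
  ring

variable {p q : ℕ}

lemma sqnorm2_combo (x z : Vec p × Vec q) {a b : ℝ} (hab : a + b = 1) :
    sqnorm2 (a • x + b • z) = a * sqnorm2 x + b * sqnorm2 z - a * b * sqnorm2 (x - z) := by
  simp only [sqnorm2, Prod.fst_add, Prod.snd_add, Prod.smul_fst, Prod.smul_snd, Prod.fst_sub,
    Prod.snd_sub, sum_sq_combo _ _ hab]
  ring

/-- Up to an affine function the left side is `θ/2 ‖·‖²`. -/
lemma kappaFun_sub_sqnorm2_combo (η θ : ℝ) (w x z : Vec p × Vec q) {a b : ℝ}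
    (hab : a + b = 1) :
    kappaFun η (a • x + b • z - w) - (η - θ) / 2 * sqnorm2 (a • x + b • z)
      = a * (kappaFun η (x - w) - (η - θ) / 2 * sqnorm2 x)
        + b * (kappaFun η (z - w) - (η - θ) / 2 * sqnorm2 z)
        - θ / 2 * (a * b * sqnorm2 (x - z)) := by
  have hw : a • x + b • z - w = a • (x - w) + b • (z - w) := by
    rw [smul_sub, smul_sub, sub_add_sub_comm, ← add_smul, hab, one_smul]
  rw [kappaFun, kappaFun, kappaFun, hw, sqnorm2_combo _ _ hab, sqnorm2_combo _ _ hab,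
    sub_sub_sub_cancel_right]
  ring

end Quadratic

section Barrier

variable {q : ℕ}

lemma phiBar_ne_bot (μ : ℝ) (γ : Vec q) : phiBar μ γ ≠ ⊥ := by
  unfold phiBar
  split_ifs <;> first | exact EReal.coe_ne_bot _ | simp

lemma phiBar_of_neg {μ : ℝ} (hμ : μ < 0) (γ : Vec q) : phiBar μ γ = ⊤ := by
  rw [phiBar, if_neg hμ.ne, if_neg hμ.not_gt]

lemma phiBar_zero {γ : Vec q} (hγ : ∀ j, 0 ≤ γ j) : phiBar 0 γ = 0 := by
  rw [phiBar, if_pos rfl, if_pos hγ]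

lemma phiBar_of_pos {μ : ℝ} (hμ : 0 < μ) {γ : Vec q} (hγ : ∀ j, 0 < γ j) :
    phiBar μ γ = ((-μ * ∑ j, Real.log (γ j / μ) : ℝ) : EReal) := by
  rw [phiBar, if_neg hμ.ne', if_pos hμ, if_pos hγ]

lemma phiBar_of_pos_of_not {μ : ℝ} (hμ : 0 < μ) {γ : Vec q} (hγ : ¬∀ j, 0 < γ j) :
    phiBar μ γ = ⊤ := by
  rw [phiBar, if_neg hμ.ne', if_pos hμ, if_neg hγ]

lemma neg_mul_sum_log_div_combo_le {μ : ℝ} (hμ : 0 < μ) {γ₁ γ₂ : Vec q}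
    (h₁ : ∀ j, 0 < γ₁ j) (h₂ : ∀ j, 0 < γ₂ j) {a b : ℝ} (ha : 0 ≤ a) (hb : 0 ≤ b)
    (hab : a + b = 1) :
    -μ * ∑ j, Real.log ((a • γ₁ + b • γ₂) j / μ)
      ≤ a * (-μ * ∑ j, Real.log (γ₁ j / μ)) + b * (-μ * ∑ j, Real.log (γ₂ j / μ)) := by
  have hlog (j : Fin q) : a * Real.log (γ₁ j / μ) + b * Real.log (γ₂ j / μ)
      ≤ Real.log ((a • γ₁ + b • γ₂) j / μ) := by
    have h := strictConcaveOn_log_Ioi.concaveOn.2 (div_pos (h₁ j) hμ) (div_pos (h₂ j) hμ)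
      ha hb hab
    simp only [smul_eq_mul] at h
    rwa [show (a • γ₁ + b • γ₂) j / μ = a * (γ₁ j / μ) + b * (γ₂ j / μ) by
      simp only [Pi.add_apply, Pi.smul_apply, smul_eq_mul]; ring]
  have hsum := Finset.sum_le_sum fun j (_ : j ∈ Finset.univ) => hlog j
  rw [Finset.sum_add_distrib, ← Finset.mul_sum, ← Finset.mul_sum] at hsum
  nlinarith

lemma EReal.coe_mul_add_coe_mul_eq_top {a b : ℝ} (ha : 0 < a) (hb : 0 ≤ b) {u v : EReal}
    (hu : u = ⊤) (hv : v ≠ ⊥) : (a : EReal) * u + b * v = ⊤ := by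
  rw [hu, EReal.coe_mul_top_of_pos ha, EReal.top_add_of_ne_bot]
  exact (EReal.mul_ne_bot _ _).mpr ⟨.inl (EReal.coe_ne_bot _), .inr hv, .inl (EReal.coe_ne_top _),
    .inl (EReal.coe_nonneg.mpr hb)⟩

lemma phiBar_combo_le (μ : ℝ) {γ₁ γ₂ : Vec q} (h₁ : ∀ j, 0 ≤ γ₁ j) (h₂ : ∀ j, 0 ≤ γ₂ j)
    {a b : ℝ} (ha : 0 ≤ a) (hb : 0 ≤ b) (hab : a + b = 1) :
    phiBar μ (a • γ₁ + b • γ₂) ≤ a * phiBar μ γ₁ + b * phiBar μ γ₂ := by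
  rcases ha.eq_or_lt with rfl | ha'
  · obtain rfl : b = 1 := by linarith
    simp
  rcases hb.eq_or_lt with rfl | hb'
  · obtain rfl : a = 1 := by linarith
    simp
  rcases lt_trichotomy μ 0 with hμ | rfl | hμ
  · rw [EReal.coe_mul_add_coe_mul_eq_top ha' hb (phiBar_of_neg hμ γ₁) (phiBar_ne_bot μ γ₂)]
    exact le_top
  · rw [phiBar_zero (smul_add_smul_nonneg h₁ h₂ ha hb), phiBar_zero h₁, phiBar_zero h₂]
    simp
  by_cases hp₁ : ∀ j, 0 < γ₁ j
  swap
  · rw [EReal.coe_mul_add_coe_mul_eq_top ha' hb (phiBar_of_pos_of_not hμ hp₁)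
      (phiBar_ne_bot μ γ₂)]
    exact le_top
  by_cases hp₂ : ∀ j, 0 < γ₂ j
  swap
  · rw [add_comm ((a : EReal) * _),
      EReal.coe_mul_add_coe_mul_eq_top hb' ha (phiBar_of_pos_of_not hμ hp₂) (phiBar_ne_bot μ γ₁)]
    exact le_top
  have hp : ∀ j, 0 < (a • γ₁ + b • γ₂) j :=
    fun j => add_pos_of_pos_of_nonneg (mul_pos ha' (hp₁ j)) (mul_nonneg hb (h₂ j))
  rw [phiBar_of_pos hμ hp, phiBar_of_pos hμ hp₁, phiBar_of_pos hμ hp₂]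
  exact_mod_cast neg_mul_sum_log_div_combo_le hμ hp₁ hp₂ ha hb hab

end Barrier

lemma EReal.coe_combo_add_combo {a b : ℝ} (ha : 0 ≤ a) (hb : 0 ≤ b) (r s : ℝ) (u v : EReal) :
    ((a * r + b * s : ℝ) : EReal) + (a * u + b * v) = a * (r + u) + b * (s + v) := by
  rw [EReal.left_distrib_of_nonneg_of_ne_top (EReal.coe_nonneg.mpr ha) (EReal.coe_ne_top a),
    EReal.left_distrib_of_nonneg_of_ne_top (EReal.coe_nonneg.mpr hb) (EReal.coe_ne_top b),
    EReal.coe_add, EReal.coe_mul, EReal.coe_mul, add_add_add_comm]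

theorem Lrelax_strongly_convex_general
    {m p q : ℕ}
    (D : LMEData m p q) (hlam : ∀ i, (D.lam i).PosDef)
    (μ η : ℝ) (w : Vec p × Vec q) :
    ∀ x ∈ {x : Vec p × Vec q | ∀ j, 0 ≤ x.2 j},
      ∀ z ∈ {x : Vec p × Vec q | ∀ j, 0 ≤ x.2 j},
        ∀ a b : ℝ, 0 ≤ a → 0 ≤ b → a + b = 1 →
          (((D.L (a • x + b • z).1 (a • x + b • z).2 + kappaFun η ((a • x + b • z) - w)
              - (η - D.etabar) / 2 * sqnorm2 (a • x + b • z) : ℝ) : EReal)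
            + phiBar μ (a • x + b • z).2)
          ≤ (a : EReal) * (((D.L x.1 x.2 + kappaFun η (x - w)
                - (η - D.etabar) / 2 * sqnorm2 x : ℝ) : EReal) + phiBar μ x.2)
            + (b : EReal) * (((D.L z.1 z.2 + kappaFun η (z - w)
                - (η - D.etabar) / 2 * sqnorm2 z : ℝ) : EReal) + phiBar μ z.2) := by
  intro x hx z hz a b ha hb hab
  have hL := D.L_combo_le hlam hx hz ha hb hab
  have hQ := kappaFun_sub_sqnorm2_combo η D.etabar w x z hab
  rw [← EReal.coe_combo_add_combo ha hb]
  exact add_le_add (EReal.coe_le_coe_iff.mpr (by linarith)) (phiBar_combo_le μ hx hz ha hb hab)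

/-- For μ ≥ 0, η > η̄ and any (β̃,γ̃), the map
(β,γ) ↦ L_{η,μ}((β,γ),(β̃,γ̃)) is strongly convex on ℝ^p × ℝ_+^q with modulus η − η̄,
i.e. subtracting ((η−η̄)/2)‖(β,γ)‖² leaves a convex function. -/
theorem Lrelax_strongly_convex
    {m p q : ℕ} (hm : 0 < m) (hp : 0 < p) (hq : 0 < q)
    (D : LMEData m p q) (hn : ∀ i, 0 < D.n i) (hlam : ∀ i, (D.lam i).PosDef)
    (μ η : ℝ) (hμ : 0 ≤ μ) (hη : D.etabar < η) (w : Vec p × Vec q) :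
    ∀ x ∈ {x : Vec p × Vec q | ∀ j, 0 ≤ x.2 j},
      ∀ z ∈ {x : Vec p × Vec q | ∀ j, 0 ≤ x.2 j},
        ∀ a b : ℝ, 0 ≤ a → 0 ≤ b → a + b = 1 →
          (((D.L (a • x + b • z).1 (a • x + b • z).2 + kappaFun η ((a • x + b • z) - w)
              - (η - D.etabar) / 2 * sqnorm2 (a • x + b • z) : ℝ) : EReal)
            + phiBar μ (a • x + b • z).2)
          ≤ (a : EReal) * (((D.L x.1 x.2 + kappaFun η (x - w)
                - (η - D.etabar) / 2 * sqnorm2 x : ℝ) : EReal) + phiBar μ x.2)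
            + (b : EReal) * (((D.L z.1 z.2 + kappaFun η (z - w)
                - (η - D.etabar) / 2 * sqnorm2 z : ℝ) : EReal) + phiBar μ z.2) :=
  Lrelax_strongly_convex_general D hlam μ η w
end
end

section
/- Fix μ ≥ 0 and let R : ℝ^p × ℝ^q → ℝ_+ ∪ {+∞} be lower semicontinuous, level compact if μ = 0 and 1-coercive if μ > 0. Let {η_k} be a strictly increasing sequence with η_k > η̄ for all k and η_k → ∞, and for each k let ((β^k,γ^k),(β̃^k,γ̃^k)) ∈ (ℝ^p×ℝ^q) × (ℝ^p×ℝ_+^q) be an optimal solution of min L_{η_k,μ}((β,γ),(β̃,γ̃)) + R(β̃,γ̃). Then every cluster point ((β̄,γ̄),(β̂,γ̂)) of the sequence {((β^k,γ^k),(β̃^k,γ̃^k))} satisfies (β̄,γ̄) = (β̂,γ̂), and (β̄,γ̄) is an optimal solution of min_{(β,γ) ∈ ℝ^p×ℝ_+^q} L(β,γ) + φ_μ(γ) + R(β,γ). -/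
open Matrix Real Filter Topology Bornology
open scoped Pointwise

noncomputable section

/-!
Comparing a minimiser `(x_k, w_k)` of the relaxed problem with `(w_k + (0, ε𝟙), w_k)` bounds
`(η_k/2)‖x_k - w_k‖²` by a quantity bounded along a convergent subsequence plus `(η_k/2) q ε²`;
dividing by `η_k → ∞` and letting `ε → 0` merges the two components of the cluster point.
Comparing with `(x, x)` for a feasible `x` bounds `L(x_k) + φ_μ(x_k) + R(w_k)` by the barrier
objective at `x`, and this bound passes to the cluster point because `L + φ_μ` is lower
semicontinuous on the closed orthant (the barrier blows up at its boundary) and so is `R`.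
-/

theorem LowerSemicontinuousAt.le_of_mapClusterPt {α β γ : Type*} [TopologicalSpace α]
    [LinearOrder γ] {f : α → γ} {x : α} {l : Filter β} {u : β → α} {c : γ}
    (hf : LowerSemicontinuousAt f x) (hx : MapClusterPt x l u) (h : ∀ᶠ k in l, f (u k) ≤ c) :
    f x ≤ c := by
  by_contra! hc
  obtain ⟨k, hlt, hle⟩ := ((hx.frequently (hf c hc)).and_eventually h).exists
  exact hlt.not_ge hle

theorem le_of_penalized_le {X Y : Type*} [TopologicalSpace X] [TopologicalSpace Y]
    {f : X → EReal} {g : Y → EReal} {x : X} {y : Y} {u : ℕ → X} {v : ℕ → Y}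
    {η d : ℕ → ℝ} {δ e : ℝ}
    (hf : LowerSemicontinuousAt f x) (hfx : f x ≠ ⊥)
    (hg : UpperSemicontinuousAt g y) (hgy : g y ≠ ⊤)
    (hu : Tendsto u atTop (𝓝 x)) (hv : Tendsto v atTop (𝓝 y))
    (hη : Tendsto η atTop atTop) (hd : Tendsto d atTop (𝓝 δ))
    (h : ∀ᶠ k in atTop, f (u k) + (η k * d k : ℝ) ≤ g (v k) + (η k * e : ℝ)) : δ ≤ e := by
  obtain ⟨A, -, hA⟩ := EReal.lt_iff_exists_real_btwn.1 (bot_lt_iff_ne_bot.2 hfx)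
  obtain ⟨B, hB, -⟩ := EReal.lt_iff_exists_real_btwn.1 (lt_top_iff_ne_top.2 hgy)
  have hbound : ∀ᶠ k in atTop, d k ≤ e + (B - A) / η k := by
    filter_upwards [hu.eventually (hf A hA), hv.eventually (hg B hB), h,
      hη.eventually_gt_atTop 0] with k hAk hBk hk hηk
    have hreal : ((A + η k * d k : ℝ) : EReal) ≤ ((B + η k * e : ℝ) : EReal) := calc
      ((A + η k * d k : ℝ) : EReal) = A + (η k * d k : ℝ) := EReal.coe_add _ _
      _ ≤ f (u k) + (η k * d k : ℝ) := by gcongr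
      _ ≤ g (v k) + (η k * e : ℝ) := hk
      _ ≤ B + (η k * e : ℝ) := by gcongr
      _ = ((B + η k * e : ℝ) : EReal) := (EReal.coe_add _ _).symm
    rw [← sub_le_iff_le_add', le_div_iff₀ hηk]
    nlinarith [EReal.coe_le_coe_iff.1 hreal]
  have hlim : Tendsto (fun k => e + (B - A) / η k) atTop (𝓝 e) := by
    simpa using tendsto_const_nhds.add (tendsto_const_nhds.div_atTop hη)
  exact le_of_tendsto_of_tendsto hd hlim hbound

lemma sqnorm2_nonneg {p q : ℕ} (w : Vec p × Vec q) : 0 ≤ sqnorm2 w := by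
  unfold sqnorm2; positivity

lemma sqnorm2_eq_zero_iff {p q : ℕ} {w : Vec p × Vec q} : sqnorm2 w = 0 ↔ w = 0 := by
  rw [sqnorm2, add_eq_zero_iff_of_nonneg (by positivity) (by positivity),
    Finset.sum_eq_zero_iff_of_nonneg (fun _ _ => sq_nonneg _),
    Finset.sum_eq_zero_iff_of_nonneg (fun _ _ => sq_nonneg _)]
  simp [Prod.ext_iff, funext_iff]

lemma continuous_sqnorm2 {p q : ℕ} : Continuous (sqnorm2 (p := p) (q := q)) := by
  unfold sqnorm2; fun_prop

lemma eq_of_forall_sqnorm2_sub_le {p q : ℕ} {x y : Vec p × Vec q} {c : ℝ}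
    (h : ∀ ε > 0, sqnorm2 (x - y) ≤ c * ε ^ 2) : x = y := by
  have hlim : Tendsto (fun ε : ℝ => c * ε ^ 2) (𝓝[>] 0) (𝓝 0) := by
    have hc : Continuous fun ε : ℝ => c * ε ^ 2 := by fun_prop
    simpa using (hc.tendsto 0).mono_left nhdsWithin_le_nhds
  have hle := ge_of_tendsto hlim (eventually_nhdsWithin_of_forall h)
  rw [← sub_eq_zero, ← sqnorm2_eq_zero_iff]
  exact le_antisymm (by simpa using hle) (sqnorm2_nonneg _)

lemma nonneg_snd_of_tendsto {α : Type*} {l : Filter α} [l.NeBot] {p q : ℕ}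
    {u : α → Vec p × Vec q} {x : Vec p × Vec q} (hu : Tendsto u l (𝓝 x))
    (h : ∀ k j, 0 ≤ (u k).2 j) (j : Fin q) : 0 ≤ x.2 j :=
  ge_of_tendsto' ((continuous_apply j).continuousAt.tendsto.comp hu.snd_nhds) fun k => h k j

lemma kappaFun_nonneg {p q : ℕ} {η : ℝ} (hη : 0 ≤ η) (w : Vec p × Vec q) :
    0 ≤ kappaFun η w :=
  mul_nonneg (by positivity) (sqnorm2_nonneg w)

lemma kappaFun_zero {p q : ℕ} (η : ℝ) : kappaFun η (0 : Vec p × Vec q) = 0 := by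
  simp [kappaFun, sqnorm2]

lemma kappaFun_zero_const {p q : ℕ} (η ε : ℝ) :
    kappaFun η ((0, fun _ => ε) : Vec p × Vec q) = η / 2 * (q * ε ^ 2) := by
  simp [kappaFun, sqnorm2]

/-- At `μ = 0` this is `0`, so `phiBar μ = logBarrier μ` on the open orthant for every `μ ≥ 0`. -/
def logBarrier {ι : Type*} [Fintype ι] (μ : ℝ) (γ : ι → ℝ) : ℝ :=
  -μ * ∑ j, Real.log (γ j / μ)

lemma continuousAt_logBarrier {ι : Type*} [Fintype ι] (μ : ℝ) {γ : ι → ℝ}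
    (hγ : ∀ j, γ j ≠ 0) : ContinuousAt (logBarrier μ) γ := by
  rcases eq_or_ne μ 0 with rfl | hμ
  · have h0 : logBarrier (0 : ℝ) = fun _ : ι → ℝ => 0 := by
      ext γ; simp [logBarrier]
    rw [h0]
    exact continuousAt_const
  · unfold logBarrier
    refine continuousAt_const.mul (tendsto_finsetSum _ fun j _ => ?_)
    exact ((continuousAt_apply j γ).div_const μ).log (div_ne_zero (hγ j) hμ)

lemma neg_mul_log_sub_le_logBarrier {ι : Type*} [Fintype ι] [DecidableEq ι] {μ : ℝ}
    (hμ : 0 < μ) {γ b : ι → ℝ} (hγ : ∀ i, 0 < γ i) (hb : γ ≤ b) (j : ι) :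
    -μ * Real.log (γ j / μ) - μ * ∑ i ∈ Finset.univ.erase j, Real.log (b i / μ)
      ≤ logBarrier μ γ := by
  have hS : ∑ i ∈ Finset.univ.erase j, Real.log (γ i / μ)
      ≤ ∑ i ∈ Finset.univ.erase j, Real.log (b i / μ) := Finset.sum_le_sum fun i _ =>
    Real.log_le_log (div_pos (hγ i) hμ) (div_le_div_of_nonneg_right (hb i) hμ.le)
  rw [logBarrier, ← Finset.add_sum_erase _ _ (Finset.mem_univ j)]
  linarith [mul_le_mul_of_nonneg_left hS hμ.le]

variable {q : ℕ}

lemma phiBar_eq_logBarrier {μ : ℝ} (hμ : 0 ≤ μ) {γ : Vec q} (hγ : ∀ j, 0 < γ j) :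
    phiBar μ γ = logBarrier μ γ := by
  rcases hμ.eq_or_lt with rfl | hμ
  · simp [phiBar, logBarrier, fun j => (hγ j).le]
  · simp [phiBar, logBarrier, hμ.ne', hμ, hγ]

lemma nonneg_of_phiBar_ne_top {μ : ℝ} {γ : Vec q} (h : phiBar μ γ ≠ ⊤) : ∀ j, 0 ≤ γ j := by
  unfold phiBar at h
  split_ifs at h with _ hγ _ hγ <;> first | exact hγ | exact fun j => (hγ j).le | simp at h

lemma continuousAt_phiBar {μ : ℝ} (hμ : 0 ≤ μ) {γ : Vec q} (hγ : ∀ j, 0 < γ j) :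
    ContinuousAt (phiBar μ) γ := by
  have hpos : ∀ᶠ γ' in 𝓝 γ, ∀ j, 0 < γ' j :=
    eventually_all.2 fun j => (continuous_apply j).continuousAt.eventually (lt_mem_nhds (hγ j))
  refine (continuous_coe_real_ereal.continuousAt.comp
    (continuousAt_logBarrier μ fun j => (hγ j).ne')).congr ?_
  filter_upwards [hpos] with γ' hγ'
  exact (phiBar_eq_logBarrier hμ hγ').symm

lemma tendsto_phiBar_top {μ : ℝ} (hμ : 0 < μ) {γ₀ : Vec q} {j : Fin q} (hj : γ₀ j ≤ 0) :
    Tendsto (phiBar μ) (𝓝 γ₀) (𝓝 ⊤) := by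
  rw [EReal.tendsto_nhds_top_iff_real]
  intro M
  set C := μ * ∑ i ∈ Finset.univ.erase j, Real.log ((γ₀ + 1) i / μ) with hC
  -- the other coordinates stay below `γ₀ + 1`, while `-μ log (γ j / μ)` exceeds `M + C`
  -- once `γ j` is below the threshold `μ exp (-(M + C) / μ)`
  have hb : ∀ᶠ γ in 𝓝 γ₀, γ ≤ γ₀ + 1 := eventually_all.2 fun i =>
    (continuous_apply i).continuousAt.eventually (eventually_le_nhds (by simp))
  have hsmall : ∀ᶠ γ in 𝓝 γ₀, γ j < μ * Real.exp (-(M + C) / μ) :=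
    (continuous_apply j).continuousAt.eventually
      (eventually_lt_nhds (hj.trans_lt (by positivity)))
  filter_upwards [hb, hsmall] with γ hγb hγj
  by_cases hγ : ∀ i, 0 < γ i
  · rw [phiBar_eq_logBarrier hμ.le hγ, EReal.coe_lt_coe_iff]
    have hlog : Real.log (γ j / μ) < -(M + C) / μ :=
      (Real.log_lt_iff_lt_exp (div_pos (hγ j) hμ)).2 ((div_lt_iff₀' hμ).2 hγj)
    rw [lt_div_iff₀ hμ] at hlog
    linarith [neg_mul_log_sub_le_logBarrier hμ hγ hγb j]
  · simp [phiBar, hμ.ne', hμ, hγ]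

lemma lowerSemicontinuous_phiBar {μ : ℝ} (hμ : 0 ≤ μ) :
    LowerSemicontinuous (phiBar μ (q := q)) := by
  rcases hμ.eq_or_lt with rfl | hμ
  · have hclosed : IsClosed {γ : Vec q | ∀ j, 0 ≤ γ j} := by
      simpa only [Set.ofPred_forall] using
        isClosed_iInter fun j => isClosed_le continuous_const (continuous_apply j)
    have hind : phiBar 0 = {γ : Vec q | ∀ j, 0 ≤ γ j}ᶜ.indicator fun _ => ⊤ := by
      ext γ
      by_cases hγ : ∀ j, 0 ≤ γ j <;> simp [phiBar, hγ]
    rw [hind]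
    exact hclosed.isOpen_compl.lowerSemicontinuous_indicator le_top
  · intro γ₀
    by_cases hγ₀ : ∀ j, 0 < γ₀ j
    · exact (continuousAt_phiBar hμ.le hγ₀).lowerSemicontinuousAt
    · obtain ⟨j, hj⟩ := not_forall.1 hγ₀
      have htop : phiBar μ γ₀ = ⊤ := by simp [phiBar, hμ.ne', hμ, hγ₀]
      have hcont : ContinuousAt (phiBar μ) γ₀ := by
        rw [ContinuousAt, htop]; exact tendsto_phiBar_top hμ (not_lt.1 hj)
      exact hcont.lowerSemicontinuousAt

lemma continuousAt_fRM {n : ℕ} {r : Vec n} {M : Matrix (Fin n) (Fin n) ℝ} (hM : M.det ≠ 0) :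
    ContinuousAt (fun z : Vec n × Matrix (Fin n) (Fin n) ℝ => fRM z.1 z.2) (r, M) := by
  have hinv : ContinuousAt (fun z : Vec n × Matrix (Fin n) (Fin n) ℝ => z.2⁻¹) (r, M) :=
    (continuousAt_matrix_inv M (by rw [Ring.inverse_eq_inv']; exact continuousAt_inv₀ hM)).comp
      continuousAt_snd
  have hquad : ContinuousAt (fun z : Vec n × Matrix (Fin n) (Fin n) ℝ => z.1 ⬝ᵥ (z.2⁻¹ *ᵥ z.1))
      (r, M) :=
    (continuous_fst.dotProduct (continuous_snd.matrix_mulVec continuous_fst)).continuousAt.comp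
      (f := fun z : Vec n × Matrix (Fin n) (Fin n) ℝ => (z.1, z.2⁻¹)) (continuousAt_fst.prodMk hinv)
  have hlog : ContinuousAt (fun z : Vec n × Matrix (Fin n) (Fin n) ℝ => Real.log z.2.det) (r, M) :=
    (continuous_snd.matrix_det.continuousAt).log hM
  exact continuousAt_const.mul (hquad.add hlog)

namespace LMEData

variable {m p q : ℕ} (D : LMEData m p q)

lemma L_eq_sum_fRM (β : Vec p) (γ : Vec q) :
    D.L β γ = ∑ i, fRM (D.y i - D.X i *ᵥ β) (D.Omega (Matrix.diagonal γ) i) := by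
  simp only [L, LML, fRM, mul_add]

lemma omega_posDef (hlam : ∀ i, (D.lam i).PosDef) {γ : Vec q} (hγ : ∀ j, 0 ≤ γ j) (i : Fin m) :
    (D.Omega (Matrix.diagonal γ) i).PosDef := by
  have hZ : (D.Z i * Matrix.diagonal γ * (D.Z i)ᵀ).PosSemidef := by
    have := (Matrix.posSemidef_diagonal_iff.2 hγ).mul_mul_conjTranspose_same (D.Z i)
    rwa [Matrix.conjTranspose_eq_transpose_of_trivial] at this
  exact Matrix.PosDef.posSemidef_add hZ (hlam i)

lemma continuousAt_L (hlam : ∀ i, (D.lam i).PosDef) {x : Vec p × Vec q} (hx : ∀ j, 0 ≤ x.2 j) :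
    ContinuousAt (fun x : Vec p × Vec q => D.L x.1 x.2) x := by
  simp only [L_eq_sum_fRM]
  refine tendsto_finsetSum _ fun i _ => ?_
  have hΩ : Continuous fun x : Vec p × Vec q => D.Omega (Matrix.diagonal x.2) i := by
    unfold Omega; fun_prop
  have hr : Continuous fun x : Vec p × Vec q => D.y i - D.X i *ᵥ x.1 := by fun_prop
  exact (continuousAt_fRM (D.omega_posDef hlam hx i).det_pos.ne').comp
    (f := fun x : Vec p × Vec q => (D.y i - D.X i *ᵥ x.1, D.Omega (Matrix.diagonal x.2) i))
    (hr.prodMk hΩ).continuousAt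

variable {D : LMEData m p q} {μ : ℝ}

def Lbarrier (D : LMEData m p q) (μ : ℝ) (x : Vec p × Vec q) : EReal :=
  (D.L x.1 x.2 : EReal) + phiBar μ x.2

def IsRelaxedMin (D : LMEData m p q) (η μ : ℝ) (R : Vec p × Vec q → EReal)
    (x w : Vec p × Vec q) : Prop :=
  ∀ x' w' : Vec p × Vec q, (∀ j, 0 ≤ w'.2 j) →
    D.Lrelax η μ x w + R w ≤ D.Lrelax η μ x' w' + R w'

lemma Lrelax_eq_Lbarrier_add (η : ℝ) (x w : Vec p × Vec q) :
    D.Lrelax η μ x w = D.Lbarrier μ x + (kappaFun η (x - w) : EReal) := by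
  rw [Lrelax, Lbarrier, EReal.coe_add, add_right_comm]

lemma Lbarrier_ne_bot (x : Vec p × Vec q) : D.Lbarrier μ x ≠ ⊥ := by
  simp [Lbarrier, EReal.add_eq_bot_iff, phiBar_ne_bot]

lemma nonneg_of_Lbarrier_ne_top {x : Vec p × Vec q} (h : D.Lbarrier μ x ≠ ⊤) : ∀ j, 0 ≤ x.2 j :=
  nonneg_of_phiBar_ne_top fun hφ => h (by rw [Lbarrier, hφ]; exact EReal.coe_add_top _)

lemma Lbarrier_ne_top (hμ : 0 ≤ μ) {x : Vec p × Vec q} (hx : ∀ j, 0 < x.2 j) :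
    D.Lbarrier μ x ≠ ⊤ := by
  rw [Lbarrier, phiBar_eq_logBarrier hμ hx, ← EReal.coe_add]
  exact EReal.coe_ne_top _

lemma lowerSemicontinuousAt_Lbarrier (hlam : ∀ i, (D.lam i).PosDef) (hμ : 0 ≤ μ)
    {x : Vec p × Vec q} (hx : ∀ j, 0 ≤ x.2 j) : LowerSemicontinuousAt (D.Lbarrier μ) x :=
  (continuous_coe_real_ereal.continuousAt.comp
    (D.continuousAt_L hlam hx)).lowerSemicontinuousAt.add'
      ((lowerSemicontinuous_phiBar hμ).comp continuous_snd x)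
    (EReal.continuousAt_add (Or.inl (EReal.coe_ne_top _)) (Or.inl (EReal.coe_ne_bot _)))

lemma continuousAt_Lbarrier (hlam : ∀ i, (D.lam i).PosDef) (hμ : 0 ≤ μ)
    {x : Vec p × Vec q} (hx : ∀ j, 0 < x.2 j) : ContinuousAt (D.Lbarrier μ) x :=
  (EReal.continuousAt_add (Or.inl (EReal.coe_ne_top _)) (Or.inl (EReal.coe_ne_bot _))).comp
    (f := fun x : Vec p × Vec q => ((D.L x.1 x.2 : EReal), phiBar μ x.2))
    ((continuous_coe_real_ereal.continuousAt.comp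
      (D.continuousAt_L hlam fun j => (hx j).le)).prodMk
      ((continuousAt_phiBar hμ hx).comp continuousAt_snd))

namespace IsRelaxedMin

variable {η : ℝ} {R : Vec p × Vec q → EReal} {x w : Vec p × Vec q}

lemma nonneg_and_ne_top (h : D.IsRelaxedMin η μ R x w) (hμ : 0 ≤ μ)
    (hR : ∀ w, R w ≠ ⊥) {w₀ : Vec p × Vec q} (hw₀ : ∀ j, 0 ≤ w₀.2 j) (hRw₀ : R w₀ ≠ ⊤) :
    (∀ j, 0 ≤ x.2 j) ∧ R w ≠ ⊤ := by
  have hx₀ : ∀ j, 0 < (w₀ + (0, fun _ => 1)).2 j := fun j => by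
    simpa using add_pos_of_nonneg_of_pos (hw₀ j) one_pos
  have hlt : D.Lrelax η μ x w + R w < ⊤ := by
    refine (h (w₀ + (0, fun _ => 1)) w₀ hw₀).trans_lt (EReal.add_lt_top ?_ hRw₀)
    rw [Lrelax_eq_Lbarrier_add]
    exact (EReal.add_lt_top (Lbarrier_ne_top hμ hx₀) (EReal.coe_ne_top _)).ne
  rw [Lrelax_eq_Lbarrier_add] at hlt
  obtain ⟨hLκ, hRw⟩ := (EReal.add_ne_top_iff_ne_top₂
    (EReal.add_ne_bot_iff.2 ⟨Lbarrier_ne_bot x, EReal.coe_ne_bot _⟩) (hR w)).1 hlt.ne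
  exact ⟨nonneg_of_Lbarrier_ne_top
    ((EReal.add_ne_top_iff_ne_top₂ (Lbarrier_ne_bot x) (EReal.coe_ne_bot _)).1 hLκ).1, hRw⟩

lemma Lbarrier_add_le (h : D.IsRelaxedMin η μ R x w) (hη : 0 ≤ η) {x' : Vec p × Vec q}
    (hx' : ∀ j, 0 ≤ x'.2 j) : D.Lbarrier μ x + R w ≤ D.Lbarrier μ x' + R x' := by
  have hκ : (0 : EReal) ≤ kappaFun η (x - w) := EReal.coe_nonneg.2 (kappaFun_nonneg hη _)
  calc D.Lbarrier μ x + R w ≤ D.Lrelax η μ x w + R w := by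
        rw [Lrelax_eq_Lbarrier_add]; gcongr; exact le_add_of_nonneg_right hκ
    _ ≤ D.Lrelax η μ x' x' + R x' := h x' x' hx'
    _ = D.Lbarrier μ x' + R x' := by
        rw [Lrelax_eq_Lbarrier_add, sub_self, kappaFun_zero, EReal.coe_zero, add_zero]

lemma Lbarrier_add_kappaFun_le (h : D.IsRelaxedMin η μ R x w) (hw : ∀ j, 0 ≤ w.2 j)
    (hRw : R w ≠ ⊤) (hRw' : R w ≠ ⊥) (ε : ℝ) :
    D.Lbarrier μ x + (kappaFun η (x - w) : EReal)
      ≤ D.Lbarrier μ (w + (0, fun _ => ε)) + (η / 2 * (q * ε ^ 2) : ℝ) := by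
  have hcmp := h (w + (0, fun _ => ε)) w hw
  rw [Lrelax_eq_Lbarrier_add, Lrelax_eq_Lbarrier_add, add_sub_cancel_left, kappaFun_zero_const,
    ← EReal.coe_toReal hRw hRw'] at hcmp
  exact (EReal.addLECancellable_coe _).add_le_add_iff_right.1 hcmp

end IsRelaxedMin

variable {R : Vec p × Vec q → EReal} {η : ℕ → ℝ} {x w : ℕ → Vec p × Vec q}

theorem eq_of_tendsto_of_isRelaxedMin (hlam : ∀ i, (D.lam i).PosDef) (hμ : 0 ≤ μ)
    (hR : ∀ w, R w ≠ ⊥) (hη : Tendsto η atTop atTop)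
    (hmin : ∀ k, D.IsRelaxedMin (η k) μ R (x k) (w k))
    (hx0 : ∀ k j, 0 ≤ (x k).2 j) (hw0 : ∀ k j, 0 ≤ (w k).2 j) (hRw : ∀ k, R (w k) ≠ ⊤)
    {xbar what : Vec p × Vec q} (hx : Tendsto x atTop (𝓝 xbar))
    (hw : Tendsto w atTop (𝓝 what)) : xbar = what := by
  have hwhat := nonneg_snd_of_tendsto hw hw0
  refine eq_of_forall_sqnorm2_sub_le (c := q) fun ε hε => ?_
  have hwε : ∀ j, 0 < (what + (0, fun _ => ε)).2 j := fun j => by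
    simpa using add_pos_of_nonneg_of_pos (hwhat j) hε
  exact le_of_penalized_le
    (D.lowerSemicontinuousAt_Lbarrier hlam hμ (nonneg_snd_of_tendsto hx hx0)) (Lbarrier_ne_bot _)
    (D.continuousAt_Lbarrier hlam hμ hwε).upperSemicontinuousAt (Lbarrier_ne_top hμ hwε)
    hx (hw.add_const _) (hη.atTop_div_const two_pos)
    ((continuous_sqnorm2.tendsto _).comp (hx.sub hw))
    (Eventually.of_forall fun k => (hmin k).Lbarrier_add_kappaFun_le (hw0 k) (hRw k) (hR _) ε)

theorem Lbarrier_add_le_of_mapClusterPt (hlam : ∀ i, (D.lam i).PosDef) (hμ : 0 ≤ μ)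
    (hR : ∀ w, R w ≠ ⊥) (hRlsc : LowerSemicontinuous R) (hη : ∀ᶠ k in atTop, 0 ≤ η k)
    (hmin : ∀ k, D.IsRelaxedMin (η k) μ R (x k) (w k)) {xbar : Vec p × Vec q}
    (hxbar : ∀ j, 0 ≤ xbar.2 j) (hclus : MapClusterPt (xbar, xbar) atTop fun k => (x k, w k))
    {x' : Vec p × Vec q} (hx' : ∀ j, 0 ≤ x'.2 j) :
    D.Lbarrier μ xbar + R xbar ≤ D.Lbarrier μ x' + R x' := by
  have hLbar := (D.lowerSemicontinuousAt_Lbarrier hlam hμ hxbar).comp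
    (continuousAt_fst (p := (xbar, xbar)))
  have hRsnd := (hRlsc xbar).comp (continuousAt_snd (p := (xbar, xbar)))
  have hsum := hLbar.add' hRsnd
    (EReal.continuousAt_add (Or.inr (hR xbar)) (Or.inl (Lbarrier_ne_bot xbar)))
  exact hsum.le_of_mapClusterPt hclus (hη.mono fun k hk => (hmin k).Lbarrier_add_le hk hx')

end LMEData

theorem consistency_eta_to_infinity_general
    {m p q : ℕ}
    (D : LMEData m p q) (hlam : ∀ i, (D.lam i).PosDef)
    (μ : ℝ) (hμ : 0 ≤ μ)
    (R : Vec p × Vec q → EReal) (hR0 : ∀ w, 0 ≤ R w)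
    (hRlsc : LowerSemicontinuous R)
    (hRproper : ∃ w : Vec p × Vec q, (∀ j, 0 ≤ w.2 j) ∧ R w ≠ ⊤)
    (ηseq : ℕ → ℝ)
    (htop : Tendsto ηseq atTop atTop)
    (xseq wseq : ℕ → Vec p × Vec q)
    (hfeas : ∀ k j, 0 ≤ (wseq k).2 j)
    (hopt : ∀ k, ∀ x' w' : Vec p × Vec q, (∀ j, 0 ≤ w'.2 j) →
      D.Lrelax (ηseq k) μ (xseq k) (wseq k) + R (wseq k)
        ≤ D.Lrelax (ηseq k) μ x' w' + R w')
    (xbar what : Vec p × Vec q)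
    (hclus : MapClusterPt (xbar, what) atTop (fun k => (xseq k, wseq k))) :
    xbar = what ∧ (∀ j, 0 ≤ xbar.2 j) ∧
      ∀ x : Vec p × Vec q, (∀ j, 0 ≤ x.2 j) →
        (D.L xbar.1 xbar.2 : EReal) + phiBar μ xbar.2 + R xbar
          ≤ (D.L x.1 x.2 : EReal) + phiBar μ x.2 + R x := by
  have hmin : ∀ k, D.IsRelaxedMin (ηseq k) μ R (xseq k) (wseq k) := hopt
  have hR : ∀ w, R w ≠ ⊥ := fun w => (EReal.bot_lt_zero.trans_le (hR0 w)).ne'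
  obtain ⟨w₀, hw₀, hRw₀⟩ := hRproper
  have hfin k := (hmin k).nonneg_and_ne_top hμ hR hw₀ hRw₀
  obtain ⟨ψ, hψ, hlim⟩ := hclus.tendsto_subseq
  have heq : xbar = what := LMEData.eq_of_tendsto_of_isRelaxedMin hlam hμ hR
    (htop.comp hψ.tendsto_atTop) (fun k => hmin (ψ k)) (fun k => (hfin (ψ k)).1)
    (fun k => hfeas (ψ k)) (fun k => (hfin (ψ k)).2) hlim.fst_nhds hlim.snd_nhds
  subst heq
  have hxbar := nonneg_snd_of_tendsto hlim.snd_nhds fun k => hfeas (ψ k)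
  exact ⟨rfl, hxbar, fun x hx => LMEData.Lbarrier_add_le_of_mapClusterPt hlam hμ hR hRlsc
    (htop.eventually_ge_atTop 0) hmin hxbar hclus hx⟩

/-- Consistency as η → ∞: cluster points of solutions of the relaxed
problems have equal components and solve the log-barrier problem. -/
theorem consistency_eta_to_infinity
    {m p q : ℕ} (hm : 0 < m) (hp : 0 < p) (hq : 0 < q)
    (D : LMEData m p q) (hn : ∀ i, 0 < D.n i) (hlam : ∀ i, (D.lam i).PosDef)
    (μ : ℝ) (hμ : 0 ≤ μ)
    (R : Vec p × Vec q → EReal) (hR0 : ∀ w, 0 ≤ R w)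
    (hRlsc : LowerSemicontinuous R)
    (hRproper : ∃ w : Vec p × Vec q, (∀ j, 0 ≤ w.2 j) ∧ R w ≠ ⊤)
    (hR0case : μ = 0 → ∀ c : ℝ, IsCompact {w : Vec p × Vec q | R w ≤ (c : EReal)})
    (hRpos : 0 < μ → OneCoercive R)
    (ηseq : ℕ → ℝ) (hmono : StrictMono ηseq) (hgt : ∀ k, D.etabar < ηseq k)
    (htop : Tendsto ηseq atTop atTop)
    (xseq wseq : ℕ → Vec p × Vec q)
    (hfeas : ∀ k j, 0 ≤ (wseq k).2 j)
    (hopt : ∀ k, ∀ x' w' : Vec p × Vec q, (∀ j, 0 ≤ w'.2 j) →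
      D.Lrelax (ηseq k) μ (xseq k) (wseq k) + R (wseq k)
        ≤ D.Lrelax (ηseq k) μ x' w' + R w')
    (xbar what : Vec p × Vec q)
    (hclus : MapClusterPt (xbar, what) atTop (fun k => (xseq k, wseq k))) :
    xbar = what ∧ (∀ j, 0 ≤ xbar.2 j) ∧
      ∀ x : Vec p × Vec q, (∀ j, 0 ≤ x.2 j) →
        (D.L xbar.1 xbar.2 : EReal) + phiBar μ xbar.2 + R xbar
          ≤ (D.L x.1 x.2 : EReal) + phiBar μ x.2 + R x :=
  consistency_eta_to_infinity_general D hlam μ hμ R hR0 hRlsc hRproper ηseq htop xseq wseq hfeas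
    hopt xbar what hclus
end
end
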